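/- Let Z = {z_1 ≥ z_2 ≥ … ≥ z_m} and Z' = {z'_1 ≥ … ≥ z'_m} be multisets of nonnegative integers with equal sums, in each of which no entry is repeated more than twice. Suppose Z ⊴ Z' (dominance of partial sums), Z ≠ Z', and Z, Z' are adjacent with respect to ⊴ among such multisets (i.e., any such multiset Z'' with Z ⊴ Z'' ⊴ Z' equals Z or Z'). Then there exist indices 1 ≤ k < l ≤ m with z'_k = z_k + 1, z'_l = z_l − 1, and z'_i = z_i for all i ≠ k, l. -/

import Mathlib

/-- Decreasing enumeration of a multiset of natural numbers. -/
def dsort (M : Multiset ℕ) : List ℕ := (M.sort (· ≤ ·)).reverse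

/-- Dominance order on multisets of naturals (of the same size and sum):
partial sums of the decreasing enumerations. -/
def MDom (M M' : Multiset ℕ) : Prop :=
  ∀ d, ((dsort M).take d).sum ≤ ((dsort M').take d).sum

/-- No entry is repeated more than twice. -/
def AtMostTwice (M : Multiset ℕ) : Prop := ∀ v, M.count v ≤ 2

/-!
Write `P d` and `Q d` for the sums of the `d` largest entries of `Z` and `Z'`. As `Z ≠ Z'`,
`P d < Q d` for some `d`; take a maximal interval `(k, l]` of such `d`, so that `P` and `Q` agree
at `k` and at `l + 1`. Moving one unit from `z_l` to `z_k` gives a multiset `Z''` whose partial sums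
are `P d + 1` on `(k, l]` and `P d` elsewhere, so `Z ⊴ Z'' ⊴ Z'`. The agreement at the two ends
forces `z_{k-1} > z_k` and `z_l > z_{l+1}`, so the entries of `Z''` are still weakly decreasing,
and, since `Z'` repeats no entry three times, even `z_{k-2} ≥ z_k + 2` and `z_l ≥ z_{l+2} + 2`, so
that neither does `Z''`. Adjacency then forces `Z'' = Z'`.
-/

open Finset

theorem List.antitone_getD_iff_pairwise_ge {L : List ℕ} :
    Antitone (L.getD · 0) ↔ L.Pairwise (· ≥ ·) := by
  refine ⟨fun h => List.pairwise_iff_getElem.2 fun i j hi hj hij => ?_, fun h i j hij => ?_⟩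
  · simpa only [List.getD_eq_getElem _ _ hi, List.getD_eq_getElem _ _ hj] using h hij.le
  · show L.getD j 0 ≤ L.getD i 0
    by_cases hj : j < L.length
    · rw [List.getD_eq_getElem _ _ hj, List.getD_eq_getElem _ _ (hij.trans_lt hj)]
      rcases hij.lt_or_eq with hij | rfl
      · exact List.pairwise_iff_getElem.1 h i j _ _ hij
      · rfl
    · rw [List.getD_eq_default _ _ (not_lt.1 hj)]
      exact Nat.zero_le _

theorem List.sum_take_eq_sum_range_getD (L : List ℕ) (d : ℕ) :
    (L.take d).sum = ∑ i ∈ Finset.range d, L.getD i 0 := by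
  induction L generalizing d with
  | nil => simp
  | cons x t ih =>
    cases d with
    | zero => simp
    | succ d =>
      rw [List.take_succ_cons, List.sum_cons, ih, Finset.sum_range_succ', add_comm]
      rfl

theorem List.getElem_le_getElem_of_pairwise_ge {L : List ℕ} (hL : L.Pairwise (· ≥ ·)) {i j : ℕ}
    (hij : i ≤ j) (hj : j < L.length) : L[j] ≤ L[i] := by
  simpa only [List.getD_eq_getElem _ _ hj, List.getD_eq_getElem _ _ (hij.trans_lt hj)] using
    List.antitone_getD_iff_pairwise_ge.2 hL hij

theorem List.three_le_count_of_getElem_le_getElem_add_two {L : List ℕ}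
    (hL : L.Pairwise (· ≥ ·)) {i : ℕ} (hi : i + 2 < L.length) (hle : L[i] ≤ L[i + 2]) :
    3 ≤ L.count L[i] := by
  have h1 := L.getElem_le_getElem_of_pairwise_ge hL (by omega : i ≤ i + 1) (by omega)
  have h2 := L.getElem_le_getElem_of_pairwise_ge hL (by omega : i + 1 ≤ i + 2) hi
  have hdrop : L.drop i = L[i] :: L[i + 1] :: L[i + 2] :: L.drop (i + 3) := by
    rw [List.drop_eq_getElem_cons, List.drop_eq_getElem_cons, List.drop_eq_getElem_cons]
  refine List.replicate_sublist_iff.1 (List.Sublist.trans ?_ (List.drop_sublist i L))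
  rw [hdrop, show L[i + 1] = L[i] by omega, show L[i + 2] = L[i] by omega]
  simp

theorem List.exists_getElem_le_getElem_add_two_of_three_le_count {L : List ℕ}
    (hL : L.Pairwise (· ≥ ·)) {v : ℕ} (hv : 3 ≤ L.count v) :
    ∃ i, ∃ hi : i + 2 < L.length, L[i] ≤ L[i + 2] := by
  obtain ⟨e, he⟩ := List.sublist_iff_exists_fin_orderEmbedding_get_eq.1
    ((List.replicate_sublist_iff (n := 3)).2 hv)
  have hlen : (List.replicate 3 v).length = 3 := List.length_replicate
  let p := e ⟨0, by omega⟩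
  let r := e ⟨2, by omega⟩
  have hpq : (p : ℕ) < e ⟨1, by omega⟩ := e.lt_iff_lt.2 (by simp)
  have hqr : (e ⟨1, by omega⟩ : ℕ) < r := e.lt_iff_lt.2 (by simp)
  have hp : L[(p : ℕ)] = v := by
    simpa only [List.get_eq_getElem, List.getElem_replicate] using (he _).symm
  have hr : L[(r : ℕ)] = v := by
    simpa only [List.get_eq_getElem, List.getElem_replicate] using (he _).symm
  refine ⟨p, by omega, ?_⟩
  have := L.getElem_le_getElem_of_pairwise_ge hL (by omega : (p : ℕ) + 2 ≤ r) r.2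
  omega

theorem List.count_le_two_iff {L : List ℕ} (hL : L.Pairwise (· ≥ ·)) :
    (∀ v, L.count v ≤ 2) ↔ ∀ i (h : i + 2 < L.length), L[i + 2] < L[i] := by
  refine ⟨fun h i hi => ?_, fun h v => ?_⟩
  · by_contra! hle
    have := L.three_le_count_of_getElem_le_getElem_add_two hL hi hle
    have := h L[i]
    omega
  · by_contra! hv
    obtain ⟨i, hi, hle⟩ := L.exists_getElem_le_getElem_add_two_of_three_le_count hL hv
    exact (h i hi).not_ge hle

theorem eq_of_forall_sum_range_eq {M : Type*} [AddCancelCommMonoid M] {f g : ℕ → M}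
    (h : ∀ d, ∑ i ∈ range d, f i = ∑ i ∈ range d, g i) : f = g :=
  funext fun d => add_left_cancel (a := ∑ i ∈ range d, f i) <| by
    rw [← sum_range_succ, h, sum_range_succ, h]

theorem pairwise_dsort (M : Multiset ℕ) : (dsort M).Pairwise (· ≥ ·) :=
  List.pairwise_reverse.2 (Multiset.pairwise_sort M (· ≤ ·))

theorem coe_dsort (M : Multiset ℕ) : (dsort M : Multiset ℕ) = M := by
  rw [dsort, ← Multiset.coe_reverse, List.reverse_reverse, Multiset.sort_eq]

theorem length_dsort (M : Multiset ℕ) : (dsort M).length = Multiset.card M := by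
  rw [dsort, List.length_reverse, Multiset.length_sort]

theorem dsort_coe_of_pairwise {L : List ℕ} (hL : L.Pairwise (· ≥ ·)) : dsort L = L :=
  List.Perm.eq_of_pairwise (fun _ _ _ _ h h' => le_antisymm h' h) (pairwise_dsort L) hL
    (Multiset.coe_eq_coe.1 (coe_dsort L))

/-- `profile M i` is the paper's `z_{i+1}`, padded with zeros from `i = card M` on. -/
def profile (M : Multiset ℕ) (i : ℕ) : ℕ := (dsort M).getD i 0

theorem antitone_profile (M : Multiset ℕ) : Antitone (profile M) :=
  List.antitone_getD_iff_pairwise_ge.2 (pairwise_dsort M)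

theorem profile_eq_zero {M : Multiset ℕ} {i : ℕ} (h : Multiset.card M ≤ i) : profile M i = 0 :=
  List.getD_eq_default _ _ ((length_dsort M).trans_le h)

theorem sum_range_profile (M : Multiset ℕ) (d : ℕ) :
    ∑ i ∈ range d, profile M i = ((dsort M).take d).sum :=
  ((dsort M).sum_take_eq_sum_range_getD d).symm

theorem mdom_iff_sum_range_profile_le {M M' : Multiset ℕ} :
    MDom M M' ↔ ∀ d, ∑ i ∈ range d, profile M i ≤ ∑ i ∈ range d, profile M' i := by
  simp only [MDom, sum_range_profile]

theorem sum_eq_sum_range_profile {M : Multiset ℕ} {n : ℕ} (h : Multiset.card M ≤ n) :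
    M.sum = ∑ i ∈ range n, profile M i := by
  rw [sum_range_profile, List.take_of_length_le ((length_dsort M).trans_le h), ← Multiset.sum_coe,
    coe_dsort]

theorem atMostTwice_iff_profile {M : Multiset ℕ} :
    AtMostTwice M ↔ ∀ i, i + 2 < Multiset.card M → profile M (i + 2) < profile M i := by
  have hcount (v : ℕ) : M.count v = (dsort M).count v := by
    rw [← Multiset.coe_count, coe_dsort]
  simp only [AtMostTwice, hcount, List.count_le_two_iff (pairwise_dsort M), ← length_dsort]
  refine forall_congr' fun i => forall_congr' fun hi => ?_
  rw [profile, profile, List.getD_eq_getElem _ _ hi, List.getD_eq_getElem _ _ (by omega)]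

theorem eq_of_profile_eq {M M' : Multiset ℕ} (hc : Multiset.card M = Multiset.card M')
    (h : profile M = profile M') : M = M' := by
  have hlen : (dsort M).length = (dsort M').length := by rw [length_dsort, length_dsort, hc]
  rw [← coe_dsort M, ← coe_dsort M', List.ext_getElem hlen fun i hi hi' => ?_]
  simpa only [profile, List.getD_eq_getElem _ _ hi, List.getD_eq_getElem _ _ hi'] using
    congrFun h i

theorem exists_profile_eq {f : ℕ → ℕ} {m : ℕ} (hf : Antitone f) (h : ∀ i, m ≤ i → f i = 0) :
    ∃ M, Multiset.card M = m ∧ profile M = f := by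
  set L := (List.range m).map f
  have hL : (L.getD · 0) = f := funext fun i => by
    rcases lt_or_ge i m with hi | hi
    · simp [L, hi]
    · simp [L, hi, h i hi]
  have hsorted : L.Pairwise (· ≥ ·) := List.antitone_getD_iff_pairwise_ge.1 (hL ▸ hf)
  refine ⟨L, by simp [L], ?_⟩
  rw [← hL]
  exact congrArg (·.getD · 0) (dsort_coe_of_pairwise hsorted)

theorem Nat.exists_maximal_Ioc_forall_not {p : ℕ → Prop} [DecidablePred p] {d n : ℕ}
    (h0 : p 0) (hd : ¬p d) (hn : p n) (hdn : d ≤ n) :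
    ∃ k l, k < l ∧ l < n ∧ p k ∧ p (l + 1) ∧ ∀ j ∈ Ioc k l, ¬p j := by
  have hk : p (Nat.findGreatest p d) := Nat.findGreatest_spec (Nat.zero_le d) h0
  have hkd : Nat.findGreatest p d < d :=
    (Nat.findGreatest_le d).lt_of_ne fun h => hd (h ▸ hk)
  have hex : ∃ j, d < j ∧ p j := ⟨n, hdn.lt_of_ne fun h => hd (h ▸ hn), hn⟩
  obtain ⟨hdl, hl⟩ := Nat.find_spec hex
  have hln : Nat.find hex ≤ n := Nat.find_min' hex ⟨hdn.lt_of_ne fun h => hd (h ▸ hn), hn⟩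
  refine ⟨Nat.findGreatest p d, Nat.find hex - 1, by omega, by omega, hk,
    by rwa [Nat.sub_add_cancel (by omega)], fun j hj => ?_⟩
  rw [mem_Ioc] at hj
  rcases le_or_gt j d with hjd | hjd
  · exact Nat.findGreatest_is_greatest hj.1 hjd
  · exact fun hpj => Nat.find_min hex (by omega) ⟨hjd, hpj⟩

structure IsStrictRun (f g : ℕ → ℕ) (k l : ℕ) : Prop where
  lt : k < l
  sum_left : ∑ i ∈ range k, f i = ∑ i ∈ range k, g i
  sum_right : ∑ i ∈ range (l + 1), f i = ∑ i ∈ range (l + 1), g i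
  sum_lt : ∀ j ∈ Ioc k l, ∑ i ∈ range j, f i < ∑ i ∈ range j, g i

theorem exists_isStrictRun {f g : ℕ → ℕ} {d n : ℕ}
    (hdom : ∀ d, ∑ i ∈ range d, f i ≤ ∑ i ∈ range d, g i)
    (hd : ∑ i ∈ range d, f i < ∑ i ∈ range d, g i)
    (hn : ∑ i ∈ range n, f i = ∑ i ∈ range n, g i) (hdn : d ≤ n) :
    ∃ k l, l < n ∧ IsStrictRun f g k l := by
  obtain ⟨k, l, hkl, hln, hk, hl, hrun⟩ :=
    Nat.exists_maximal_Ioc_forall_not (p := fun j => ∑ i ∈ range j, f i = ∑ i ∈ range j, g i)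
      (by simp) hd.ne hn hdn
  exact ⟨k, l, hln, hkl, hk, hl, fun j hj => (hdom j).lt_of_ne (hrun j hj)⟩

def transfer (f : ℕ → ℕ) (k l : ℕ) : ℕ → ℕ :=
  Function.update (Function.update f k (f k + 1)) l (f l - 1)

section transfer

variable {f : ℕ → ℕ} {k l : ℕ}

theorem transfer_apply_left (hkl : k ≠ l) : transfer f k l k = f k + 1 := by
  simp [transfer, hkl]

theorem transfer_apply_right : transfer f k l l = f l - 1 := by
  simp [transfer]

theorem transfer_apply_of_ne {i : ℕ} (hk : i ≠ k) (hl : i ≠ l) : transfer f k l i = f i := by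
  simp [transfer, hk, hl]

theorem sum_range_transfer (hkl : k < l) (hl : 0 < f l) (d : ℕ) :
    ∑ i ∈ range d, transfer f k l i = ∑ i ∈ range d, f i + if k < d ∧ d ≤ l then 1 else 0 := by
  induction d with
  | zero => simp
  | succ d ih =>
    rw [sum_range_succ, sum_range_succ, ih]
    simp only [transfer, Function.update_apply]
    split_ifs <;> subst_vars <;> omega

theorem antitone_transfer (hkl : k ≤ l) (hf : Antitone f) (hk : ∀ i < k, f k < f i)
    (hl : ∀ j, l < j → f j < f l) : Antitone (transfer f k l) := by
  refine antitone_nat_of_succ_le fun i => ?_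
  have := hf (Nat.le_add_right i 1)
  have := hk i
  have := hl (i + 1)
  simp only [transfer, Function.update_apply]
  split_ifs <;> subst_vars <;> omega

theorem transfer_add_two_lt {m : ℕ} (hkl : k < l) (hf2 : ∀ i, i + 2 < m → f (i + 2) < f i)
    (hk : ∀ i, i + 2 = k → f k + 2 ≤ f i) (hl : l + 2 < m → f (l + 2) + 2 ≤ f l) {i : ℕ}
    (hi : i + 2 < m) : transfer f k l (i + 2) < transfer f k l i := by
  have := hf2 i hi
  have := hk i
  simp only [transfer, Function.update_apply]
  split_ifs <;> subst_vars <;> omega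

end transfer

namespace IsStrictRun

variable {f g : ℕ → ℕ} {k l : ℕ}

theorem lt_left (h : IsStrictRun f g k l) : f k < g k := by
  have := h.sum_lt (k + 1) (mem_Ioc.2 ⟨k.lt_succ_self, h.lt⟩)
  rw [sum_range_succ, sum_range_succ, h.sum_left] at this
  omega

theorem lt_right (h : IsStrictRun f g k l) : g l < f l := by
  have := h.sum_lt l (mem_Ioc.2 ⟨h.lt, le_rfl⟩)
  have := h.sum_right
  rw [sum_range_succ, sum_range_succ] at this
  omega

theorem apply_left_lt (h : IsStrictRun f g k l) (hf : Antitone f) (hg : Antitone g)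
    (hdom : ∀ d, ∑ i ∈ range d, f i ≤ ∑ i ∈ range d, g i) {i : ℕ} (hi : i < k) : f k < f i := by
  obtain ⟨j, rfl⟩ : ∃ j, k = j + 1 := ⟨k - 1, by omega⟩
  have hsum := h.sum_left
  rw [sum_range_succ, sum_range_succ] at hsum
  have := hdom j
  have := hg (Nat.le_add_right j 1)
  have := hf (Nat.le_of_lt_add_one hi)
  have := h.lt_left
  omega

theorem apply_lt_right (h : IsStrictRun f g k l) (hf : Antitone f) (hg : Antitone g)
    (hdom : ∀ d, ∑ i ∈ range d, f i ≤ ∑ i ∈ range d, g i) {j : ℕ} (hj : l < j) : f j < f l := by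
  have hsum := hdom (l + 2)
  rw [sum_range_succ, h.sum_right, sum_range_succ _ (l + 1)] at hsum
  have := hg (Nat.le_add_right l 1)
  have := hf (Nat.add_one_le_of_lt hj)
  have := h.lt_right
  omega

theorem add_two_le_left (h : IsStrictRun f g k l) (hf : Antitone f) (hg : Antitone g)
    (hdom : ∀ d, ∑ i ∈ range d, f i ≤ ∑ i ∈ range d, g i) {i : ℕ} (hi : i + 2 = k)
    (hg2 : g k < g i) : f k + 2 ≤ f i := by
  subst hi
  have hsum := h.sum_left
  simp only [sum_range_succ] at hsum
  have := hdom i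
  have := hg (by omega : i + 1 ≤ i + 2)
  have := hf (Nat.le_add_right i 1)
  have := h.lt_left
  omega

theorem add_two_le_right (h : IsStrictRun f g k l) (hf : Antitone f) (hg : Antitone g)
    (hdom : ∀ d, ∑ i ∈ range d, f i ≤ ∑ i ∈ range d, g i) (hg2 : g (l + 2) < g l) :
    f (l + 2) + 2 ≤ f l := by
  have hsum := hdom (l + 3)
  have hright := h.sum_right
  simp only [sum_range_succ] at hsum hright
  have := hg (Nat.le_add_right l 1)
  have := hf (by omega : l + 1 ≤ l + 2)
  have := h.lt_right
  omega

theorem antitone_transfer (h : IsStrictRun f g k l) (hf : Antitone f) (hg : Antitone g)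
    (hdom : ∀ d, ∑ i ∈ range d, f i ≤ ∑ i ∈ range d, g i) : Antitone (transfer f k l) :=
  _root_.antitone_transfer h.lt.le hf (fun _ hi => h.apply_left_lt hf hg hdom hi)
    (fun _ hj => h.apply_lt_right hf hg hdom hj)

theorem transfer_add_two_lt (h : IsStrictRun f g k l) (hf : Antitone f) (hg : Antitone g)
    (hdom : ∀ d, ∑ i ∈ range d, f i ≤ ∑ i ∈ range d, g i) {m : ℕ} (hkm : k < m)
    (hf2 : ∀ i, i + 2 < m → f (i + 2) < f i) (hg2 : ∀ i, i + 2 < m → g (i + 2) < g i) {i : ℕ}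
    (hi : i + 2 < m) : transfer f k l (i + 2) < transfer f k l i :=
  _root_.transfer_add_two_lt h.lt hf2
    (fun j hj => h.add_two_le_left hf hg hdom hj (hj ▸ hg2 j (hj ▸ hkm)))
    (fun hl => h.add_two_le_right hf hg hdom (hg2 l hl)) hi

theorem sum_range_le_sum_range_transfer (h : IsStrictRun f g k l) (d : ℕ) :
    ∑ i ∈ range d, f i ≤ ∑ i ∈ range d, transfer f k l i := by
  rw [sum_range_transfer h.lt (Nat.zero_lt_of_lt h.lt_right)]
  exact Nat.le_add_right _ _

theorem sum_range_transfer_le (h : IsStrictRun f g k l)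
    (hdom : ∀ d, ∑ i ∈ range d, f i ≤ ∑ i ∈ range d, g i) (d : ℕ) :
    ∑ i ∈ range d, transfer f k l i ≤ ∑ i ∈ range d, g i := by
  rw [sum_range_transfer h.lt (Nat.zero_lt_of_lt h.lt_right)]
  split_ifs with hd
  · exact h.sum_lt d (mem_Ioc.2 hd)
  · exact hdom d

end IsStrictRun

theorem exists_isStrictRun_profile {m : ℕ} {Z Z' : Multiset ℕ} (hZm : Multiset.card Z = m)
    (hZ'm : Multiset.card Z' = m) (hsum : Z.sum = Z'.sum) (hdom : MDom Z Z') (hne : Z ≠ Z') :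
    ∃ k l, l < m ∧ IsStrictRun (profile Z) (profile Z') k l := by
  rw [mdom_iff_sum_range_profile_le] at hdom
  have hsum_ge {n : ℕ} (hn : m ≤ n) :
      ∑ i ∈ range n, profile Z i = ∑ i ∈ range n, profile Z' i := by
    rw [← sum_eq_sum_range_profile (hZm.trans_le hn), ← sum_eq_sum_range_profile (hZ'm.trans_le hn),
      hsum]
  obtain ⟨d, hd⟩ : ∃ d, ∑ i ∈ range d, profile Z i < ∑ i ∈ range d, profile Z' i := by
    by_contra! h
    exact hne (eq_of_profile_eq (hZm.trans hZ'm.symm)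
      (eq_of_forall_sum_range_eq fun d => (hdom d).antisymm (h d)))
  have hdm : d ≤ m := by
    by_contra! h
    exact hd.ne (hsum_ge h.le)
  exact exists_isStrictRun hdom hd (hsum_ge le_rfl) hdm

theorem exists_transfer_between {m : ℕ} {Z Z' : Multiset ℕ} (hZm : Multiset.card Z = m)
    (hZ'm : Multiset.card Z' = m) (hsum : Z.sum = Z'.sum) (hZ : AtMostTwice Z)
    (hZ' : AtMostTwice Z') (hdom : MDom Z Z') (hne : Z ≠ Z') :
    ∃ k l Z'', k < l ∧ l < m ∧ 0 < profile Z l ∧ Multiset.card Z'' = m ∧ Z''.sum = Z.sum ∧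
      AtMostTwice Z'' ∧ MDom Z Z'' ∧ MDom Z'' Z' ∧ profile Z'' = transfer (profile Z) k l := by
  obtain ⟨k, l, hlm, hrun⟩ := exists_isStrictRun_profile hZm hZ'm hsum hdom hne
  rw [mdom_iff_sum_range_profile_le] at hdom
  rw [atMostTwice_iff_profile, hZm] at hZ
  rw [atMostTwice_iff_profile, hZ'm] at hZ'
  have hf := antitone_profile Z
  have hg := antitone_profile Z'
  have hkl := hrun.lt
  obtain ⟨Z'', hcard, hprof⟩ := exists_profile_eq (m := m) (hrun.antitone_transfer hf hg hdom)
    fun i hi => by rw [transfer_apply_of_ne (by omega) (by omega), profile_eq_zero (by omega)]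
  refine ⟨k, l, Z'', hkl, hlm, Nat.zero_lt_of_lt hrun.lt_right, hcard, ?_, ?_, ?_, ?_, hprof⟩
  · rw [sum_eq_sum_range_profile hcard.le, sum_eq_sum_range_profile hZm.le, hprof,
      sum_range_transfer hkl (Nat.zero_lt_of_lt hrun.lt_right), if_neg (by omega), add_zero]
  · rw [atMostTwice_iff_profile, hcard, hprof]
    exact fun i hi => hrun.transfer_add_two_lt hf hg hdom (by omega) hZ hZ' hi
  · rw [mdom_iff_sum_range_profile_le, hprof]
    exact hrun.sum_range_le_sum_range_transfer
  · rw [mdom_iff_sum_range_profile_le, hprof]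
    exact hrun.sum_range_transfer_le hdom

theorem adjacent_multisets_differ_in_two_entries (m : ℕ) (Z Z' : Multiset ℕ)
    (hZm : Multiset.card Z = m) (hZ'm : Multiset.card Z' = m)
    (hsum : Z.sum = Z'.sum)
    (hZ : AtMostTwice Z) (hZ' : AtMostTwice Z')
    (hdom : MDom Z Z') (hne : Z ≠ Z')
    (hadj : ∀ Z'' : Multiset ℕ, Multiset.card Z'' = m → Z''.sum = Z.sum →
      AtMostTwice Z'' → MDom Z Z'' → MDom Z'' Z' → Z'' = Z ∨ Z'' = Z') :
    ∃ k l, k < l ∧ l < m ∧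
      (dsort Z').getD k 0 = (dsort Z).getD k 0 + 1 ∧
      (dsort Z').getD l 0 + 1 = (dsort Z).getD l 0 ∧
      ∀ i, i < m → i ≠ k → i ≠ l → (dsort Z').getD i 0 = (dsort Z).getD i 0 := by
  obtain ⟨k, l, Z'', hkl, hlm, hl, hcard, hsum'', hZ'', hdom₁, hdom₂, hprof⟩ :=
    exists_transfer_between hZm hZ'm hsum hZ hZ' hdom hne
  have hZ''Z : Z'' ≠ Z := by
    rintro rfl
    have := (congrFun hprof k).trans (transfer_apply_left hkl.ne)
    omega
  obtain rfl := (hadj Z'' hcard hsum'' hZ'' hdom₁ hdom₂).resolve_left hZ''Z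
  refine ⟨k, l, hkl, hlm, (congrFun hprof k).trans (transfer_apply_left hkl.ne), ?_,
    fun i _ hik hil => (congrFun hprof i).trans (transfer_apply_of_ne hik hil)⟩
  have := (congrFun hprof l).trans transfer_apply_right
  show profile Z'' l + 1 = profile Z l
  omega
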